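/- For an ergodic stationary stochastic process S = (S_n) with values in a finite linearly ordered alphabet, for every l ≥ 1, lim_{k→∞} H(R_{k+1}, ..., R_{k+l} | S_1, ..., S_k) = lim_{k→∞} H(S_{k+1}, ..., S_{k+l} | S_1, ..., S_k), where R_n = Σ_{i=1}^n 1[S_i ≤ S_n] are the rank variables. -/

import Mathlib

/-!
Let `a_k = H(S_{k+1..k+l} | S_{1..k})` and `b_k = H(R_{k+1..k+l} | S_{1..k})`. By stationarity,
and because conditioning on less cannot decrease entropy, `a_k` is antitone; being nonnegative it
converges. Given the past, the future ranks are a function of the future letters, so `b_k ≤ a_k`.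
Conversely, once every letter of positive probability has occurred among `S_1, …, S_k`, each future
letter is determined by the past and its rank (a letter is pinned down by how many earlier letters
lie below it), so `a_k ≤ b_k + C · P(some such letter is missing from S_1, …, S_k)`. By ergodicity
the process visits every letter of positive probability almost surely, so this probability tends
to `0` and `b_k` is squeezed to the limit of `a_k`.
-/

open MeasureTheory ProbabilityTheory Filter Real

/-- Shannon entropy (base 2) of a random variable. -/
noncomputable def shEntropy {Ω : Type*} [MeasurableSpace Ω] {A : Type*}
    (μ : Measure Ω) (X : Ω → A) : ℝ :=
  -∑' a : A, (μ (X ⁻¹' {a})).toReal * Real.logb 2 (μ (X ⁻¹' {a})).toReal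

/-- Conditional Shannon entropy `H(Y|Z) = Σ_z P(Z=z) H(Y | Z=z)`. -/
noncomputable def condShEntropy {Ω : Type*} [MeasurableSpace Ω] {A B : Type*}
    (μ : Measure Ω) (Y : Ω → A) (Z : Ω → B) : ℝ :=
  ∑' b : B, (μ (Z ⁻¹' {b})).toReal * shEntropy (μ[|Z ⁻¹' {b}]) Y

open Classical in
/-- Rank variable `R_n(ω) = #{i : 1 ≤ i ≤ n, S_i(ω) ≤ S_n(ω)}`. -/
noncomputable def rankVar {Ω A : Type*} [LinearOrder A] (S : ℕ → Ω → A) (n : ℕ) (ω : Ω) : ℕ :=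
  ((Finset.Icc 1 n).filter (fun i => S i ω ≤ S n ω)).card

lemma Real.negMulLog_sum_le {ι : Type*} {s : Finset ι} {p : ι → ℝ} (hp : ∀ i ∈ s, 0 ≤ p i) :
    negMulLog (∑ i ∈ s, p i) ≤ ∑ i ∈ s, negMulLog (p i) := by
  simp only [negMulLog, neg_mul, Finset.sum_mul, ← Finset.sum_neg_distrib]
  refine Finset.sum_le_sum fun i hi => neg_le_neg ?_
  rcases (hp i hi).eq_or_lt with h | h
  · simp [← h]
  · exact mul_le_mul_of_nonneg_left
      (log_le_log h (Finset.single_le_sum hp hi)) h.le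

/-- The log-sum inequality. -/
lemma Real.sum_mul_negMulLog_div_le {ι : Type*} {s : Finset ι} {p q : ι → ℝ}
    (hp : ∀ i ∈ s, 0 ≤ p i) (hq : ∀ i ∈ s, 0 ≤ q i) (hpq : ∀ i ∈ s, q i = 0 → p i = 0) :
    ∑ i ∈ s, q i * negMulLog (p i / q i) ≤
      (∑ i ∈ s, q i) * negMulLog ((∑ i ∈ s, p i) / ∑ i ∈ s, q i) := by
  set Q := ∑ i ∈ s, q i
  rcases (Finset.sum_nonneg hq).eq_or_lt with hQ | hQ
  · have hq0 : ∀ i ∈ s, q i = 0 := (Finset.sum_eq_zero_iff_of_nonneg hq).1 hQ.symm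
    rw [Finset.sum_eq_zero fun i hi => by rw [hq0 i hi, zero_mul], show Q = 0 from hQ.symm,
      zero_mul]
  have hweights : ∑ i ∈ s, q i / Q = 1 := by rw [← Finset.sum_div, div_self hQ.ne']
  have hmean : ∑ i ∈ s, (q i / Q) • (p i / q i) = (∑ i ∈ s, p i) / Q := by
    rw [Finset.sum_div]
    refine Finset.sum_congr rfl fun i hi => ?_
    rcases (hq i hi).eq_or_lt with h | h
    · simp [← h, hpq i hi h.symm]
    · rw [smul_eq_mul]; field_simp
  have hjensen := concaveOn_negMulLog.le_map_sum (t := s) (w := fun i => q i / Q)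
    (p := fun i => p i / q i) (fun i hi => div_nonneg (hq i hi) hQ.le) hweights
    (fun i hi => Set.mem_Ici.2 (div_nonneg (hp i hi) (hq i hi)))
  rw [hmean] at hjensen
  calc ∑ i ∈ s, q i * negMulLog (p i / q i)
      = Q * ∑ i ∈ s, (q i / Q) • negMulLog (p i / q i) := by
        rw [Finset.mul_sum]
        refine Finset.sum_congr rfl fun i _ => ?_
        rw [smul_eq_mul, ← mul_assoc, mul_div_cancel₀ _ hQ.ne']
    _ ≤ Q * negMulLog ((∑ i ∈ s, p i) / Q) := mul_le_mul_of_nonneg_left hjensen hQ.le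

section Entropy

variable {Ω A B C : Type*} [MeasurableSpace Ω]

lemma shEntropy_eq_tsum_negMulLog (ν : Measure Ω) (X : Ω → A) :
    shEntropy ν X = (log 2)⁻¹ * ∑' a, negMulLog (ν.real (X ⁻¹' {a})) := by
  rw [shEntropy, ← tsum_mul_left, ← tsum_neg]
  congr 1
  funext a
  simp only [negMulLog, logb, measureReal_def]
  ring

lemma shEntropy_nonneg (ν : Measure Ω) [IsZeroOrProbabilityMeasure ν] (X : Ω → A) :
    0 ≤ shEntropy ν X := by
  rw [shEntropy_eq_tsum_negMulLog]
  exact mul_nonneg (by positivity)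
    (tsum_nonneg fun a => negMulLog_nonneg measureReal_nonneg measureReal_le_one)

lemma shEntropy_le_card [Fintype A] (ν : Measure Ω) (X : Ω → A) :
    shEntropy ν X ≤ Fintype.card A / log 2 := by
  rw [shEntropy_eq_tsum_negMulLog, tsum_fintype, div_eq_inv_mul]
  refine mul_le_mul_of_nonneg_left ?_ (by positivity)
  calc ∑ a, negMulLog (ν.real (X ⁻¹' {a}))
      ≤ ∑ _a : A, (1 : ℝ) := Finset.sum_le_sum fun a _ =>
        (negMulLog_le_one_sub_self measureReal_nonneg).trans (sub_le_self _ measureReal_nonneg)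
    _ = Fintype.card A := by simp

lemma shEntropy_congr_ae {ν : Measure Ω} {X Y : Ω → A} (h : X =ᵐ[ν] Y) :
    shEntropy ν X = shEntropy ν Y := by
  simp only [shEntropy_eq_tsum_negMulLog]
  refine congrArg _ (tsum_congr fun a => congrArg _ (measureReal_congr ?_))
  filter_upwards [h] with ω hω
  change (X ω = a) = (Y ω = a)
  rw [hω]

lemma shEntropy_comp_le (ν : Measure Ω) [IsFiniteMeasure ν] [MeasurableSpace B]
    [MeasurableSingletonClass B] {Y : Ω → B} (hY : Measurable Y) (hfin : (Set.range Y).Finite)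
    (f : B → C) : shEntropy ν (f ∘ Y) ≤ shEntropy ν Y := by
  classical
  set t := hfin.toFinset
  have hYt : ∀ ω, Y ω ∈ t := fun ω => hfin.mem_toFinset.2 ⟨ω, rfl⟩
  have hfiber : ∀ c, (f ∘ Y) ⁻¹' {c} = Y ⁻¹' ↑(t.filter (f · = c)) := fun c => by
    ext ω; simp [hYt ω]
  rw [shEntropy_eq_tsum_negMulLog, shEntropy_eq_tsum_negMulLog]
  refine mul_le_mul_of_nonneg_left ?_ (by positivity)
  rw [tsum_eq_sum (s := t.image f) fun c hc => by
      rw [hfiber, Finset.filter_false_of_mem fun b hb (hbc : f b = c) =>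
        hc (hbc ▸ Finset.mem_image_of_mem f hb)]
      simp,
    tsum_eq_sum (s := t) fun b hb => by
      rw [show Y ⁻¹' {b} = ∅ from Set.eq_empty_of_forall_notMem fun ω hω => hb (hω ▸ hYt ω)]
      simp]
  calc ∑ c ∈ t.image f, negMulLog (ν.real ((f ∘ Y) ⁻¹' {c}))
      = ∑ c ∈ t.image f, negMulLog (∑ b ∈ t with f b = c, ν.real (Y ⁻¹' {b})) := by
        refine Finset.sum_congr rfl fun c _ => ?_
        rw [hfiber, sum_measureReal_preimage_singleton _ fun b _ => hY (measurableSet_singleton b)]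
    _ ≤ ∑ c ∈ t.image f, ∑ b ∈ t with f b = c, negMulLog (ν.real (Y ⁻¹' {b})) :=
        Finset.sum_le_sum fun c _ => negMulLog_sum_le fun b _ => measureReal_nonneg
    _ = ∑ b ∈ t, negMulLog (ν.real (Y ⁻¹' {b})) :=
        Finset.sum_fiberwise_of_maps_to (fun b hb => Finset.mem_image_of_mem f hb) _

lemma shEntropy_le_shEntropy_comp_of_injOn (ν : Measure Ω) [IsFiniteMeasure ν] [Fintype A]
    [Nonempty A] [MeasurableSpace A] [MeasurableSingletonClass A] [MeasurableSpace C]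
    [MeasurableSingletonClass C] {X : Ω → A} (hX : Measurable X) {f : A → C} {s : Set A}
    (hf : Set.InjOn f s) (hXs : ∀ᵐ ω ∂ν, X ω ∈ s) : shEntropy ν X ≤ shEntropy ν (f ∘ X) :=
  calc shEntropy ν X = shEntropy ν (Function.invFunOn f s ∘ (f ∘ X)) :=
        shEntropy_congr_ae (hXs.mono fun ω h => (hf.leftInvOn_invFunOn h).symm)
    _ ≤ shEntropy ν (f ∘ X) := by
        refine shEntropy_comp_le ν ((Measurable.of_discrete (f := f)).comp hX) ?_ _
        rw [Set.range_comp]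
        exact (Set.toFinite _).image f

end Entropy

section CondEntropy

variable {Ω A B C : Type*} [MeasurableSpace Ω] {μ : Measure Ω}

lemma condShEntropy_nonneg (Y : Ω → A) (Z : Ω → B) : 0 ≤ condShEntropy μ Y Z :=
  tsum_nonneg fun _ => mul_nonneg ENNReal.toReal_nonneg (shEntropy_nonneg _ _)

variable [MeasurableSpace B] [MeasurableSingletonClass B]

lemma sum_measureReal_preimage_singleton_inter [IsFiniteMeasure μ] (s : Finset B) {Z : Ω → B}
    (hZ : Measurable Z) (t : Set Ω) :
    ∑ b ∈ s, μ.real (Z ⁻¹' {b} ∩ t) = μ.real (Z ⁻¹' s ∩ t) :=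
  calc ∑ b ∈ s, μ.real (Z ⁻¹' {b} ∩ t) = ∑ b ∈ s, (μ.restrict t).real (Z ⁻¹' {b}) :=
        Finset.sum_congr rfl fun b _ =>
          (measureReal_restrict_apply (hZ (measurableSet_singleton b))).symm
    _ = (μ.restrict t).real (Z ⁻¹' s) :=
        sum_measureReal_preimage_singleton s fun b _ => hZ (measurableSet_singleton b)
    _ = μ.real (Z ⁻¹' s ∩ t) := measureReal_restrict_apply (hZ s.finite_toSet.measurableSet)

lemma condShEntropy_eq_sum [Fintype A] [Fintype B] (Y : Ω → A) {Z : Ω → B} (hZ : Measurable Z) :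
    condShEntropy μ Y Z = (log 2)⁻¹ * ∑ b, ∑ a, μ.real (Z ⁻¹' {b}) *
      negMulLog (μ.real (Z ⁻¹' {b} ∩ Y ⁻¹' {a}) / μ.real (Z ⁻¹' {b})) := by
  rw [condShEntropy, tsum_fintype, Finset.mul_sum]
  refine Finset.sum_congr rfl fun b _ => ?_
  rw [shEntropy_eq_tsum_negMulLog, tsum_fintype, Finset.mul_sum, Finset.mul_sum, Finset.mul_sum]
  refine Finset.sum_congr rfl fun a _ => ?_
  rw [measureReal_def, cond_apply (hZ (measurableSet_singleton b)), ENNReal.toReal_mul,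
    ENNReal.toReal_inv, inv_mul_eq_div (μ (Z ⁻¹' {b})).toReal]
  simp only [measureReal_def]
  ring

lemma condShEntropy_comp_measurePreserving [Fintype A] [Fintype B] [MeasurableSpace A]
    [MeasurableSingletonClass A] {T : Ω → Ω} (hT : MeasurePreserving T μ μ) {Y : Ω → A}
    {Z : Ω → B} (hY : Measurable Y) (hZ : Measurable Z) :
    condShEntropy μ (Y ∘ T) (Z ∘ T) = condShEntropy μ Y Z := by
  rw [condShEntropy_eq_sum _ (hZ.comp hT.measurable), condShEntropy_eq_sum _ hZ]
  refine congrArg _ (Finset.sum_congr rfl fun b _ => Finset.sum_congr rfl fun a _ => ?_)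
  have hb := hZ (measurableSet_singleton b)
  rw [Set.preimage_comp, Set.preimage_comp, ← Set.preimage_inter,
    hT.measureReal_preimage hb.nullMeasurableSet,
    hT.measureReal_preimage (hb.inter (hY (measurableSet_singleton a))).nullMeasurableSet]

lemma condShEntropy_le_condShEntropy_comp [IsFiniteMeasure μ] [Fintype A] [Fintype B]
    [Fintype C] [MeasurableSpace C] [MeasurableSingletonClass C] {Y : Ω → A} {Z : Ω → B}
    (hZ : Measurable Z) (f : B → C) :
    condShEntropy μ Y Z ≤ condShEntropy μ Y (f ∘ Z) := by
  classical
  have hfiber : ∀ c, (f ∘ Z) ⁻¹' {c} = Z ⁻¹' ↑(Finset.univ.filter (f · = c)) := fun c => by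
    ext; simp
  rw [condShEntropy_eq_sum Y hZ,
    condShEntropy_eq_sum Y ((Measurable.of_discrete (f := f)).comp hZ),
    ← Finset.sum_fiberwise Finset.univ f]
  refine mul_le_mul_of_nonneg_left (Finset.sum_le_sum fun c _ => ?_) (by positivity)
  rw [Finset.sum_comm]
  refine Finset.sum_le_sum fun a _ => ?_
  have hmass : ∑ b with f b = c, μ.real (Z ⁻¹' {b}) = μ.real ((f ∘ Z) ⁻¹' {c}) := by
    rw [hfiber, sum_measureReal_preimage_singleton _ fun b _ => hZ (measurableSet_singleton b)]
  have hjoint : ∑ b with f b = c, μ.real (Z ⁻¹' {b} ∩ Y ⁻¹' {a}) =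
      μ.real ((f ∘ Z) ⁻¹' {c} ∩ Y ⁻¹' {a}) := by
    rw [hfiber, sum_measureReal_preimage_singleton_inter _ hZ]
  rw [← hmass, ← hjoint]
  exact sum_mul_negMulLog_div_le (fun _ _ => measureReal_nonneg) (fun _ _ => measureReal_nonneg)
    fun b _ h => le_antisymm (h ▸ measureReal_mono Set.inter_subset_left) measureReal_nonneg

lemma shEntropy_cond_preimage_singleton_comp {X : Ω → A} {Z : Ω → B} (hZ : Measurable Z)
    (F : B → A → C) (b : B) :
    shEntropy μ[|Z ⁻¹' {b}] (fun ω => F (Z ω) (X ω)) = shEntropy μ[|Z ⁻¹' {b}] (F b ∘ X) :=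
  shEntropy_congr_ae <| (ae_cond_mem (hZ (measurableSet_singleton b))).mono fun ω hω => by
    change F (Z ω) (X ω) = F b (X ω)
    rw [show Z ω = b from hω]

lemma condShEntropy_comp_le_condShEntropy [Fintype A] [Fintype B] [MeasurableSpace A]
    [MeasurableSingletonClass A] {X : Ω → A} {Z : Ω → B} (hX : Measurable X) (hZ : Measurable Z)
    (F : B → A → C) :
    condShEntropy μ (fun ω => F (Z ω) (X ω)) Z ≤ condShEntropy μ X Z := by
  rw [condShEntropy, condShEntropy, tsum_fintype, tsum_fintype]
  refine Finset.sum_le_sum fun b _ => mul_le_mul_of_nonneg_left ?_ ENNReal.toReal_nonneg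
  rw [shEntropy_cond_preimage_singleton_comp hZ]
  exact shEntropy_comp_le _ hX (Set.toFinite _) _

lemma condShEntropy_le_condShEntropy_comp_add [IsFiniteMeasure μ] [Fintype A] [Nonempty A]
    [Fintype B] [MeasurableSpace A] [MeasurableSingletonClass A] [MeasurableSpace C]
    [MeasurableSingletonClass C] {X : Ω → A} {Z : Ω → B} (hX : Measurable X) (hZ : Measurable Z)
    (F : B → A → C) {G : B → Set A} (hF : ∀ b, Set.InjOn (F b) (G b)) (bad : Set B)
    (hG : ∀ b ∉ bad, ∀ᵐ ω ∂μ[|Z ⁻¹' {b}], X ω ∈ G b) :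
    condShEntropy μ X Z ≤
      condShEntropy μ (fun ω => F (Z ω) (X ω)) Z + Fintype.card A / log 2 * μ.real (Z ⁻¹' bad) := by
  classical
  have hbad : μ.real (Z ⁻¹' bad) = ∑ b, if b ∈ bad then μ.real (Z ⁻¹' {b}) else 0 := by
    rw [← Finset.sum_filter, sum_measureReal_preimage_singleton _ fun b _ =>
      hZ (measurableSet_singleton b)]
    simp
  rw [condShEntropy, condShEntropy, tsum_fintype, tsum_fintype, hbad, Finset.mul_sum,
    ← Finset.sum_add_distrib]
  refine Finset.sum_le_sum fun b _ => ?_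
  rw [shEntropy_cond_preimage_singleton_comp hZ]
  have hmass : 0 ≤ (μ (Z ⁻¹' {b})).toReal := ENNReal.toReal_nonneg
  split_ifs with hb
  · have hR := shEntropy_nonneg μ[|Z ⁻¹' {b}] (F b ∘ X)
    have hXle := shEntropy_le_card μ[|Z ⁻¹' {b}] X
    rw [measureReal_def]
    nlinarith
  · rw [mul_zero, add_zero]
    exact mul_le_mul_of_nonneg_left
      (shEntropy_le_shEntropy_comp_of_injOn _ hX (hF b) (hG b hb)) hmass

end CondEntropy

section Rank

variable {A : Type*}

/-- The word `p₁ … p_k x₁ … x_l`, indexed from `1` and padded with `d`. -/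
def concatWord (d : A) {k l : ℕ} (p : Fin k → A) (x : Fin l → A) (i : ℕ) : A :=
  if h : i - 1 < k then p ⟨i - 1, h⟩ else if h' : i - 1 - k < l then x ⟨i - 1 - k, h'⟩ else d

lemma concatWord_past (d : A) {k l : ℕ} (p : Fin k → A) (x : Fin l → A) (i : Fin k) :
    concatWord d p x (i + 1) = p i := by
  simp [concatWord]

lemma concatWord_future (d : A) {k l : ℕ} (p : Fin k → A) (x : Fin l → A) (j : Fin l) :
    concatWord d p x (k + 1 + j) = x j := by
  rw [concatWord, dif_neg (by omega), dif_pos (by omega)]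
  exact congrArg x (Fin.ext (by simp only; omega))

lemma eqOn_concatWord (d : A) {k l : ℕ} {p : Fin k → A} {x : Fin l → A} {w : ℕ → A}
    (hp : ∀ i : Fin k, w (i + 1) = p i) (hx : ∀ j : Fin l, w (k + 1 + j) = x j) :
    Set.EqOn w (concatWord d p x) (Set.Icc 1 (k + l)) := by
  rintro n ⟨hn1, hnkl⟩
  rcases le_or_gt n k with hnk | hkn
  · obtain ⟨i, rfl⟩ : ∃ i : Fin k, n = i + 1 := ⟨⟨n - 1, by omega⟩, by simp; omega⟩
    rw [hp, concatWord_past]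
  · obtain ⟨j, rfl⟩ : ∃ j : Fin l, n = k + 1 + j := ⟨⟨n - k - 1, by omega⟩, by simp; omega⟩
    rw [hx, concatWord_future]

variable [LinearOrder A]

def rankOf (w : ℕ → A) (n : ℕ) : ℕ :=
  ((Finset.Icc 1 n).filter fun i => w i ≤ w n).card

lemma rankVar_eq_rankOf {Ω : Type*} (S : ℕ → Ω → A) (n : ℕ) (ω : Ω) :
    rankVar S n ω = rankOf (S · ω) n :=
  rfl

lemma rankOf_congr {w w' : ℕ → A} {n : ℕ} (h : Set.EqOn w w' (Set.Icc 1 n)) :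
    rankOf w n = rankOf w' n := by
  unfold rankOf
  congr 1
  refine Finset.filter_congr fun i hi => ?_
  rw [Finset.mem_Icc] at hi
  rw [h hi, h ⟨hi.1.trans hi.2, le_rfl⟩]

lemma rankOf_eq_card_add_one (w : ℕ → A) {n : ℕ} (hn : 1 ≤ n) :
    rankOf w n = ((Finset.Ico 1 n).filter fun i => w i ≤ w n).card + 1 := by
  rw [rankOf, ← Finset.Ico_insert_right hn, Finset.filter_insert, if_pos le_rfl,
    Finset.card_insert_of_notMem (by simp)]

lemma card_filter_le_lt_card_filter_le {ι : Type*} {s : Finset ι} {w : ι → A} {a b : A}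
    (hab : a < b) (hb : b ∈ w '' s) :
    (s.filter fun i => w i ≤ a).card < (s.filter fun i => w i ≤ b).card := by
  obtain ⟨i, hi, rfl⟩ := hb
  refine Finset.card_lt_card (Finset.ssubset_iff_of_subset ?_ |>.2 ⟨i, ?_, ?_⟩)
  · exact Finset.monotone_filter_right _ fun j _ hj => hj.trans hab.le
  · simpa using hi
  · simp [hab]

lemma injOn_card_filter_le {ι : Type*} (s : Finset ι) (w : ι → A) :
    Set.InjOn (fun a => (s.filter fun i => w i ≤ a).card) (w '' s) := by
  intro a ha b hb hab
  rcases lt_trichotomy a b with h | h | h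
  · exact absurd hab (card_filter_le_lt_card_filter_le h hb).ne
  · exact h
  · exact absurd hab (card_filter_le_lt_card_filter_le h ha).ne'

lemma eqOn_of_rankOf_eq {w w' : ℕ → A} {k m : ℕ} (hpast : Set.EqOn w w' (Set.Icc 1 k))
    (hw : ∀ n ∈ Set.Ioc k m, w n ∈ w '' Set.Icc 1 k)
    (hw' : ∀ n ∈ Set.Ioc k m, w' n ∈ w '' Set.Icc 1 k)
    (hrank : ∀ n ∈ Set.Ioc k m, rankOf w n = rankOf w' n) : Set.EqOn w w' (Set.Icc 1 m) := by
  intro n hn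
  induction n using Nat.strong_induction_on with
  | _ n ih =>
    obtain ⟨hn1, hnm⟩ := hn
    rcases le_or_gt n k with hnk | hkn
    · exact hpast ⟨hn1, hnk⟩
    have hnew : n ∈ Set.Ioc k m := ⟨hkn, hnm⟩
    have hbelow : ∀ i ∈ Finset.Ico 1 n, w i = w' i := fun i hi => by
      rw [Finset.mem_Ico] at hi
      exact ih i hi.2 ⟨hi.1, by omega⟩
    have hsub : w '' Set.Icc 1 k ⊆ w '' ↑(Finset.Ico 1 n) :=
      Set.image_mono fun i hi => by
        simp only [Finset.coe_Ico, Set.mem_Ico]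
        exact ⟨hi.1, hi.2.trans_lt hkn⟩
    have hcount := hrank n hnew
    have hfilter : ((Finset.Ico 1 n).filter fun i => w' i ≤ w' n) =
        (Finset.Ico 1 n).filter fun i => w i ≤ w' n :=
      Finset.filter_congr fun i hi => by rw [hbelow i hi]
    rw [rankOf_eq_card_add_one w hn1, rankOf_eq_card_add_one w' hn1, add_left_inj,
      hfilter] at hcount
    exact injOn_card_filter_le _ w (hsub (hw n hnew)) (hsub (hw' n hnew)) hcount

def rankBlock (d : A) {k l : ℕ} (p : Fin k → A) (x : Fin l → A) : Fin l → ℕ :=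
  fun j => rankOf (concatWord d p x) (k + 1 + j)

lemma rankBlock_injOn (d : A) {k l : ℕ} (p : Fin k → A) :
    Set.InjOn (rankBlock d p) {x : Fin l → A | ∀ j, x j ∈ Set.range p} := by
  intro x hx x' hx' h
  have hpast : ∀ n ∈ Set.Icc 1 k, ∃ i : Fin k, n = i + 1 := fun n ⟨h1, h2⟩ =>
    ⟨⟨n - 1, by omega⟩, by simp; omega⟩
  have hnew : ∀ n ∈ Set.Ioc k (k + l), ∃ j : Fin l, n = k + 1 + j := fun n ⟨h1, h2⟩ =>
    ⟨⟨n - k - 1, by omega⟩, by simp; omega⟩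
  have hocc : ∀ y : Fin l → A, y ∈ {x : Fin l → A | ∀ j, x j ∈ Set.range p} →
      ∀ n ∈ Set.Ioc k (k + l), concatWord d p y n ∈ concatWord d p x '' Set.Icc 1 k := by
    rintro y hy n hn
    obtain ⟨j, rfl⟩ := hnew n hn
    obtain ⟨i, hi⟩ := hy j
    refine ⟨i + 1, ⟨by omega, by omega⟩, ?_⟩
    rw [concatWord_past, concatWord_future, hi]
  have hagree := eqOn_of_rankOf_eq (m := k + l)
    (fun n hn => by
      obtain ⟨i, rfl⟩ := hpast n hn
      rw [concatWord_past, concatWord_past])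
    (hocc x hx) (hocc x' hx') fun n hn => by
      obtain ⟨j, rfl⟩ := hnew n hn
      exact congrFun h j
  funext j
  rw [← concatWord_future d p x, ← concatWord_future d p x', hagree ⟨by omega, by omega⟩]

end Rank

lemma Ergodic.tendsto_measure_forall_iterate_notMem {Ω : Type*} [MeasurableSpace Ω]
    {μ : Measure Ω} [IsProbabilityMeasure μ] {T : Ω → Ω} (hT : Ergodic T μ) {s : Set Ω}
    (hs : MeasurableSet s) (hs0 : μ s ≠ 0) :
    Tendsto (fun k => μ {ω | ∀ n < k, T^[n] ω ∉ s}) atTop (nhds 0) := by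
  have hE : ∀ k, MeasurableSet {ω | ∀ n < k, T^[n] ω ∉ s} := fun k => by
    simp only [Set.ofPred_forall]
    exact MeasurableSet.iInter fun n => MeasurableSet.iInter fun _ =>
      (hT.measurable.iterate n hs).compl
  have hanti : Antitone fun k => {ω | ∀ n < k, T^[n] ω ∉ s} :=
    fun k k' hkk' ω hω n hn => hω n (hn.trans_le hkk')
  set N := ⋂ k, {ω | ∀ n < k, T^[n] ω ∉ s}
  have hN : N ⊆ T ⁻¹' N := by
    intro ω hω
    simp only [N, Set.mem_iInter, Set.mem_ofPred_eq, Set.mem_preimage] at hω ⊢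
    intro k n _
    rw [← Function.iterate_succ_apply]
    exact hω (n + 2) (n + 1) (by omega)
  have hNs : N ⊆ sᶜ := fun ω hω => by simpa using Set.mem_iInter.1 hω 1 0 one_pos
  have hN0 : μ N = 0 := by
    rcases hT.ae_empty_or_univ_of_ae_le_preimage (MeasurableSet.iInter hE).nullMeasurableSet
      hN.eventuallyLE with h | h
    · simpa using measure_congr h
    · have hcompl : μ sᶜ < 1 := by
        rw [prob_compl_eq_one_sub hs]
        exact ENNReal.sub_lt_self ENNReal.one_ne_top one_ne_zero hs0
      have hN1 : μ N = 1 := by rw [measure_congr h, measure_univ]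
      exact absurd (hN1 ▸ measure_mono hNs) hcompl.not_ge
  have hlim := tendsto_measure_iInter_atTop (μ := μ) (fun k => (hE k).nullMeasurableSet) hanti
    ⟨0, measure_ne_top _ _⟩
  rwa [hN0] at hlim

lemma ae_measure_preimage_singleton_ne_zero {Ω A : Type*} [MeasurableSpace Ω] [Countable A]
    (μ : Measure Ω) (Y : Ω → A) : ∀ᵐ ω ∂μ, μ (Y ⁻¹' {Y ω}) ≠ 0 := by
  rw [ae_iff]
  simp only [ne_eq, not_not]
  exact measure_mono_null (μ := μ) (fun ω hω => Set.mem_iUnion.2 ⟨⟨Y ω, hω⟩, rfl⟩)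
    (measure_iUnion_null fun a : {a | μ (Y ⁻¹' {a}) = 0} => a.2)

section Stationary

variable {Ω A : Type*}

def pastWord (S : ℕ → Ω → A) (k : ℕ) (ω : Ω) : Fin k → A := fun i => S (i + 1) ω

def futureWord (S : ℕ → Ω → A) (k l : ℕ) (ω : Ω) : Fin l → A := fun j => S (k + 1 + j) ω

noncomputable def futureRanks [LinearOrder A] (S : ℕ → Ω → A) (k l : ℕ) (ω : Ω) : Fin l → ℕ :=
  fun j => rankVar S (k + 1 + j) ω

def incompleteWords [MeasurableSpace Ω] (μ : Measure Ω) (g : Ω → A) (k : ℕ) : Set (Fin k → A) :=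
  {p | ∃ a, μ (g ⁻¹' {a}) ≠ 0 ∧ a ∉ Set.range p}

lemma futureRanks_eq_rankBlock [LinearOrder A] (d : A) (S : ℕ → Ω → A) (k l : ℕ) :
    futureRanks S k l = fun ω => rankBlock d (pastWord S k ω) (futureWord S k l ω) :=
  funext fun ω => funext fun j => (rankVar_eq_rankOf S _ ω).trans <| rankOf_congr <|
    (eqOn_concatWord d (fun _ => rfl) fun _ => rfl).mono (Set.Icc_subset_Icc le_rfl (by omega))

lemma apply_succ_of_eq_iterate {S : ℕ → Ω → A} {T : Ω → Ω} {g : Ω → A}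
    (hS : ∀ n ω, S n ω = g (T^[n - 1] ω)) {n : ℕ} (hn : 1 ≤ n) (ω : Ω) :
    S (n + 1) ω = S n (T ω) := by
  rw [hS, hS, ← Function.iterate_succ_apply, Nat.succ_eq_add_one, Nat.sub_add_cancel hn,
    Nat.add_sub_cancel]

variable [MeasurableSpace Ω] [MeasurableSpace A] {S : ℕ → Ω → A}

lemma measurable_pastWord (hS : ∀ n, Measurable (S n)) (k : ℕ) : Measurable (pastWord S k) :=
  measurable_pi_lambda _ fun _ => hS _

lemma measurable_futureWord (hS : ∀ n, Measurable (S n)) (k l : ℕ) :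
    Measurable (futureWord S k l) :=
  measurable_pi_lambda _ fun _ => hS _

variable {μ : Measure Ω} {T : Ω → Ω} {g : Ω → A}

lemma measurable_of_eq_iterate (hT : Measurable T) (hg : Measurable g)
    (hS : ∀ n ω, S n ω = g (T^[n - 1] ω)) (n : ℕ) : Measurable (S n) := by
  rw [show S n = g ∘ T^[n - 1] from funext (hS n)]
  exact hg.comp (hT.iterate _)

lemma measure_preimage_eq_of_eq_iterate (hT : MeasurePreserving T μ μ) (hg : Measurable g)
    (hS : ∀ n ω, S n ω = g (T^[n - 1] ω)) (n : ℕ) {t : Set A} (ht : MeasurableSet t) :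
    μ (S n ⁻¹' t) = μ (g ⁻¹' t) := by
  rw [show S n = g ∘ T^[n - 1] from funext (hS n), Set.preimage_comp,
    (hT.iterate _).measure_preimage (hg ht).nullMeasurableSet]

lemma antitone_condShEntropy_futureWord [Fintype A] [MeasurableSingletonClass A]
    [IsFiniteMeasure μ] (hT : MeasurePreserving T μ μ) (hg : Measurable g)
    (hS : ∀ n ω, S n ω = g (T^[n - 1] ω)) (l : ℕ) :
    Antitone fun k => condShEntropy μ (futureWord S k l) (pastWord S k) := by
  have hSm := measurable_of_eq_iterate hT.measurable hg hS
  refine antitone_nat_of_succ_le fun k => ?_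
  have hpast : (Fin.tail ∘ pastWord S (k + 1) : Ω → Fin k → A) = pastWord S k ∘ T :=
    funext fun ω => funext fun i => apply_succ_of_eq_iterate hS (n := i + 1) (by omega) ω
  have hfuture : futureWord S (k + 1) l = futureWord S k l ∘ T :=
    funext fun ω => funext fun j => by
      simpa [futureWord, add_right_comm] using apply_succ_of_eq_iterate hS (by omega) ω
  calc condShEntropy μ (futureWord S (k + 1) l) (pastWord S (k + 1))
      ≤ condShEntropy μ (futureWord S (k + 1) l) (Fin.tail ∘ pastWord S (k + 1)) :=
        condShEntropy_le_condShEntropy_comp (measurable_pastWord hSm _) _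
    _ = condShEntropy μ (futureWord S k l) (pastWord S k) := by
        rw [hpast, hfuture]
        exact condShEntropy_comp_measurePreserving hT (measurable_futureWord hSm k l)
          (measurable_pastWord hSm k)

lemma ae_cond_futureWord_mem_range (hT : MeasurePreserving T μ μ) (hg : Measurable g)
    (hS : ∀ n ω, S n ω = g (T^[n - 1] ω)) [Countable A] [MeasurableSingletonClass A] {k l : ℕ}
    {p : Fin k → A} (hp : p ∉ incompleteWords μ g k) :
    ∀ᵐ ω ∂μ[|pastWord S k ⁻¹' {p}], ∀ j, futureWord S k l ω j ∈ Set.range p := by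
  have hsupp : ∀ᵐ ω ∂μ, ∀ j, μ (g ⁻¹' {futureWord S k l ω j}) ≠ 0 := ae_all_iff.2 fun j => by
    filter_upwards [ae_measure_preimage_singleton_ne_zero μ (S (k + 1 + j))] with ω hω
    rwa [measure_preimage_eq_of_eq_iterate hT hg hS _ (measurableSet_singleton _)] at hω
  filter_upwards [cond_absolutelyContinuous.ae_le hsupp] with ω hω j
  by_contra h
  exact hp ⟨_, hω j, h⟩

variable [Fintype A] [LinearOrder A] [MeasurableSingletonClass A] [Nonempty A]

lemma condShEntropy_futureRanks_le (hS : ∀ n, Measurable (S n)) (k l : ℕ) :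
    condShEntropy μ (futureRanks S k l) (pastWord S k) ≤
      condShEntropy μ (futureWord S k l) (pastWord S k) := by
  obtain ⟨d⟩ := ‹Nonempty A›
  rw [futureRanks_eq_rankBlock d]
  exact condShEntropy_comp_le_condShEntropy (measurable_futureWord hS k l)
    (measurable_pastWord hS k) _

lemma condShEntropy_futureWord_le_add [IsFiniteMeasure μ] (hT : MeasurePreserving T μ μ)
    (hg : Measurable g) (hS : ∀ n ω, S n ω = g (T^[n - 1] ω)) (k l : ℕ) :
    condShEntropy μ (futureWord S k l) (pastWord S k) ≤
      condShEntropy μ (futureRanks S k l) (pastWord S k) +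
        Fintype.card (Fin l → A) / log 2 * μ.real (pastWord S k ⁻¹' incompleteWords μ g k) := by
  obtain ⟨d⟩ := ‹Nonempty A›
  have hSm := measurable_of_eq_iterate hT.measurable hg hS
  rw [futureRanks_eq_rankBlock d]
  exact condShEntropy_le_condShEntropy_comp_add (measurable_futureWord hSm k l)
    (measurable_pastWord hSm k) _ (fun p => rankBlock_injOn d p) _
    fun p hp => ae_cond_futureWord_mem_range hT hg hS hp

end Stationary

lemma tendsto_measure_pastWord_incompleteWords {Ω A : Type*} [MeasurableSpace Ω] [Fintype A]
    [MeasurableSpace A] [MeasurableSingletonClass A] {μ : Measure Ω} [IsProbabilityMeasure μ]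
    {T : Ω → Ω} (hT : Ergodic T μ) {g : Ω → A} (hg : Measurable g) {S : ℕ → Ω → A}
    (hS : ∀ n ω, S n ω = g (T^[n - 1] ω)) :
    Tendsto (fun k => μ (pastWord S k ⁻¹' incompleteWords μ g k)) atTop (nhds 0) := by
  classical
  set letters := Finset.univ.filter fun a => μ (g ⁻¹' {a}) ≠ 0
  have hsub : ∀ k, pastWord S k ⁻¹' incompleteWords μ g k ⊆
      ⋃ a ∈ letters, {ω | ∀ n < k, T^[n] ω ∉ g ⁻¹' {a}} := by
    rintro k ω ⟨a, ha, hmiss⟩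
    refine Set.mem_biUnion (Finset.mem_filter.2 ⟨Finset.mem_univ a, ha⟩) fun n hn hga => ?_
    refine hmiss ⟨⟨n, hn⟩, ?_⟩
    simpa [pastWord, hS] using hga
  have hlim : Tendsto (fun k => ∑ a ∈ letters, μ {ω | ∀ n < k, T^[n] ω ∉ g ⁻¹' {a}}) atTop
      (nhds 0) := by
    simpa using tendsto_finsetSum letters fun a ha =>
      hT.tendsto_measure_forall_iterate_notMem (hg (measurableSet_singleton a))
        (Finset.mem_filter.1 ha).2
  exact tendsto_of_tendsto_of_tendsto_of_le_of_le tendsto_const_nhds hlim (fun _ => bot_le)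
    fun k => (measure_mono (hsub k)).trans (measure_biUnion_finset_le _ _)

/-- For an ergodic stationary process `S_n = g ∘ T^{n-1}` with values in a finite
linearly ordered alphabet, for every `l ≥ 1`,
`lim_k H(R_{k+1},…,R_{k+l} | S_1,…,S_k) = lim_k H(S_{k+1},…,S_{k+l} | S_1,…,S_k)`
(both limits existing and equal). -/
theorem condEntropy_rank_eq_limit {Ω A : Type*} [MeasurableSpace Ω]
    [Fintype A] [LinearOrder A] [MeasurableSpace A] [MeasurableSingletonClass A]
    (μ : Measure Ω) [IsProbabilityMeasure μ]
    (T : Ω → Ω) (hT : Ergodic T μ) (g : Ω → A) (hg : Measurable g)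
    (S : ℕ → Ω → A) (hSdef : ∀ n ω, S n ω = g (T^[n - 1] ω)) :
    ∀ l : ℕ, 1 ≤ l → ∃ c : ℝ,
      Filter.Tendsto
        (fun k : ℕ =>
          condShEntropy μ (fun ω => fun j : Fin l => rankVar S (k + 1 + j.1) ω)
            (fun ω => fun i : Fin k => S (i.1 + 1) ω))
        Filter.atTop (nhds c)
      ∧ Filter.Tendsto
          (fun k : ℕ =>
            condShEntropy μ (fun ω => fun j : Fin l => S (k + 1 + j.1) ω)
              (fun ω => fun i : Fin k => S (i.1 + 1) ω))
          Filter.atTop (nhds c) := by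
  intro l _
  have hTμ := hT.toMeasurePreserving
  have : Nonempty A := ⟨g (nonempty_of_isProbabilityMeasure μ).some⟩
  set a := fun k => condShEntropy μ (futureWord S k l) (pastWord S k)
  have ha : Tendsto a atTop (nhds (⨅ k, a k)) :=
    tendsto_atTop_ciInf (antitone_condShEntropy_futureWord hTμ hg hSdef l)
      ⟨0, by rintro _ ⟨k, rfl⟩; exact condShEntropy_nonneg _ _⟩
  have hmiss : Tendsto (fun k => μ.real (pastWord S k ⁻¹' incompleteWords μ g k)) atTop
      (nhds 0) :=
    (ENNReal.tendsto_toReal ENNReal.zero_ne_top).comp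
      (tendsto_measure_pastWord_incompleteWords hT hg hSdef)
  show ∃ c, Tendsto (fun k => condShEntropy μ (futureRanks S k l) (pastWord S k)) atTop (nhds c)
    ∧ Tendsto a atTop (nhds c)
  have hlower := ha.sub (hmiss.const_mul (Fintype.card (Fin l → A) / log 2))
  rw [mul_zero, sub_zero] at hlower
  refine ⟨⨅ k, a k, tendsto_of_tendsto_of_tendsto_of_le_of_le hlower ha
    (fun k => sub_le_iff_le_add.2 (condShEntropy_futureWord_le_add hTμ hg hSdef k l))
    (fun k => condShEntropy_futureRanks_le (measurable_of_eq_iterate hTμ.measurable hg hSdef) k l),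
    ha⟩
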